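/- Let n : ℕ, σ > 0, and let F : (Fin n → ℝ) → ℝ be bounded and measurable. Let μ be the product measure on Fin n → ℝ whose every coordinate is gaussianReal 0 σ² (i.e., the coordinates of the perturbation ε are i.i.d. N(0, σ²)). Then for every θ : Fin n → ℝ and every coordinate j : Fin n, the partial map t ↦ ∫ F((Function.update θ j t) + ε) dμ(ε) is differentiable at t = θ j, and its derivative there equals (1/σ²) · ∫ (ε j) · F(θ + ε) dμ(ε). (Coordinatewise form of ∇_θ E_{ε∼N(0,σ²I)}[F(θ + ε)] = (1/σ²) E[F(θ + ε) ε].) -/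

import Mathlib

/-!
Integrating out every coordinate of `ε` except the `j`-th (Fubini along `Fin.insertNth`) turns
`F (θ + ε)` into a bounded measurable function `g` of the single real variable `θ j + ε j`, and the
partial map becomes `t ↦ ∫ g dN(t, σ²)`. Its derivative is obtained by differentiating the Gaussian
density in its mean under the integral sign, which produces the score factor `(x - t) / σ²`; for
means within distance `1` of `t`, the differentiated density is dominated by a Gaussian of twice
the variance, which is integrable.
-/

open MeasureTheory ProbabilityTheory Real
open scoped NNReal

lemma hasDerivAt_gaussianPDFReal_mean (v : ℝ≥0) (x m : ℝ) :
    HasDerivAt (fun m => gaussianPDFReal m v x) ((x - m) / v * gaussianPDFReal m v x) m := by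
  rcases eq_or_ne v 0 with rfl | hv
  · simpa [gaussianPDFReal_zero_var] using hasDerivAt_const m (0 : ℝ)
  have hexponent : HasDerivAt (fun m => -(x - m) ^ 2 / (2 * v)) ((x - m) / v) m :=
    ((((hasDerivAt_id m).const_sub x).pow 2).neg.div_const _).congr_deriv
      (by simp only [id]; field_simp; ring)
  refine (hexponent.exp.const_mul (√(2 * π * v))⁻¹).congr_deriv ?_
  rw [gaussianPDFReal_def]
  ring

lemma exp_neg_mul_sq_le_of_abs_sub_le {a b c : ℝ} (hc : 0 ≤ c) (hab : |a - b| ≤ 1) :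
    exp (-c * a ^ 2) ≤ exp c * exp (-(c / 2) * b ^ 2) := by
  have hb : b ^ 2 ≤ 2 * a ^ 2 + 2 := by
    nlinarith [abs_le.mp hab, sq_nonneg (2 * a - b)]
  rw [← exp_add, exp_le_exp]
  nlinarith [mul_le_mul_of_nonneg_left hb hc]

lemma integrable_abs_add_one_mul_exp_neg_mul_sq {b : ℝ} (hb : 0 < b) (c : ℝ) :
    Integrable (fun x => (|x - c| + 1) * exp (-b * (x - c) ^ 2)) := by
  have habs : Integrable (fun x : ℝ => |x| * exp (-b * x ^ 2)) := by
    simpa [abs_mul] using (integrable_mul_exp_neg_mul_sq hb).abs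
  simpa [add_mul] using (habs.add (integrable_exp_neg_mul_sq hb)).comp_sub_right c

lemma abs_sub_div_mul_gaussianPDFReal_le {v : ℝ≥0} (hv : v ≠ 0) {m m₀ : ℝ} (hm : |m - m₀| ≤ 1)
    (x : ℝ) :
    |(x - m) / v * gaussianPDFReal m v x| ≤ (√(2 * π * v))⁻¹ / v * exp (2 * (v : ℝ))⁻¹ *
      ((|x - m₀| + 1) * exp (-(4 * (v : ℝ))⁻¹ * (x - m₀) ^ 2)) := by
  have hv' : (0 : ℝ) < v := by positivity
  have hdist : |x - m| ≤ |x - m₀| + 1 := by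
    calc |x - m| ≤ |x - m₀| + |m₀ - m| := abs_sub_le _ _ _
      _ ≤ |x - m₀| + 1 := by rw [abs_sub_comm m₀]; gcongr
  have hexp : exp (-(x - m) ^ 2 / (2 * v)) ≤
      exp (2 * (v : ℝ))⁻¹ * exp (-(4 * (v : ℝ))⁻¹ * (x - m₀) ^ 2) := by
    have := exp_neg_mul_sq_le_of_abs_sub_le (a := x - m) (b := x - m₀) (c := (2 * (v : ℝ))⁻¹)
      (by positivity) (by rwa [sub_sub_sub_cancel_left, abs_sub_comm])
    convert this using 3 <;> ring
  rw [abs_mul, abs_div, abs_of_pos hv', abs_of_nonneg (gaussianPDFReal_nonneg _ _ _)]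
  simp only [gaussianPDFReal_def]
  calc |x - m| / v * ((√(2 * π * v))⁻¹ * exp (-(x - m) ^ 2 / (2 * v)))
      ≤ (|x - m₀| + 1) / v * ((√(2 * π * v))⁻¹ *
          (exp (2 * (v : ℝ))⁻¹ * exp (-(4 * (v : ℝ))⁻¹ * (x - m₀) ^ 2))) := by gcongr
    _ = _ := by ring

variable {E : Type*} [NormedAddCommGroup E] [NormedSpace ℝ E]

theorem hasDerivAt_integral_gaussianReal_mean {v : ℝ≥0} (hv : v ≠ 0) {g : ℝ → E}
    (hg : AEStronglyMeasurable g) {C : ℝ} (hC : ∀ x, ‖g x‖ ≤ C) (m₀ : ℝ) :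
    HasDerivAt (fun m => ∫ x, g x ∂gaussianReal m v)
      ((v : ℝ)⁻¹ • ∫ x, (x - m₀) • g x ∂gaussianReal m₀ v) m₀ := by
  have hC0 : 0 ≤ C := (norm_nonneg _).trans (hC 0)
  simp only [integral_gaussianReal_eq_integral_smul hv]
  have hderiv := hasDerivAt_integral_of_dominated_loc_of_deriv_le (μ := volume) (x₀ := m₀)
    (F := fun m x => gaussianPDFReal m v x • g x)
    (F' := fun m x => ((x - m) / v * gaussianPDFReal m v x) • g x)
    (bound := fun x => C * ((√(2 * π * v))⁻¹ / v * exp (2 * (v : ℝ))⁻¹ *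
      ((|x - m₀| + 1) * exp (-(4 * (v : ℝ))⁻¹ * (x - m₀) ^ 2))))
    (Metric.closedBall_mem_nhds m₀ one_pos)
    (.of_forall fun m => (measurable_gaussianPDFReal m v).aestronglyMeasurable.smul hg)
    ((integrable_gaussianPDFReal m₀ v).smul_bdd C hg (.of_forall hC))
    ((((measurable_id.sub_const m₀).div_const _).mul
      (measurable_gaussianPDFReal m₀ v)).aestronglyMeasurable.smul hg)
    (.of_forall fun x m hm => by
      rw [norm_smul, mul_comm, Real.norm_eq_abs]
      exact mul_le_mul (hC x) (abs_sub_div_mul_gaussianPDFReal_le hv hm x) (abs_nonneg _) hC0)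
    ((integrable_abs_add_one_mul_exp_neg_mul_sq (by positivity) m₀).const_mul _ |>.const_mul _)
    (.of_forall fun x m _ => (hasDerivAt_gaussianPDFReal_mean v x m).smul_const (g x))
  refine hderiv.2.congr_deriv ?_
  rw [← integral_smul]
  congr 1 with x
  rw [smul_smul, smul_smul]
  ring_nf

lemma integral_gaussianReal_comp_const_add (μ : ℝ) (v : ℝ≥0) (t : ℝ) (f : ℝ → E) :
    ∫ s, f (t + s) ∂gaussianReal μ v = ∫ x, f x ∂gaussianReal (μ + t) v := by
  rw [← gaussianReal_map_const_add, (measurableEmbedding_addLeft t).integral_map]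

theorem hasDerivAt_integral_gaussianReal_comp_add {v : ℝ≥0} (hv : v ≠ 0) {g : ℝ → E}
    (hg : AEStronglyMeasurable g) {C : ℝ} (hC : ∀ x, ‖g x‖ ≤ C) (t₀ : ℝ) :
    HasDerivAt (fun t => ∫ s, g (t + s) ∂gaussianReal 0 v)
      ((v : ℝ)⁻¹ • ∫ s, s • g (t₀ + s) ∂gaussianReal 0 v) t₀ := by
  have hvalue :
      ∫ s, s • g (t₀ + s) ∂gaussianReal 0 v = ∫ x, (x - t₀) • g x ∂gaussianReal t₀ v := by
    simpa using integral_gaussianReal_comp_const_add 0 v t₀ (fun x => (x - t₀) • g x)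
  rw [hvalue]
  simp only [integral_gaussianReal_comp_const_add, zero_add]
  exact hasDerivAt_integral_gaussianReal_mean hv hg hC t₀

theorem integral_pi_eq_integral_integral_insertNth {n : ℕ} {α : Fin (n + 1) → Type*}
    [∀ i, MeasurableSpace (α i)] (μ : ∀ i, Measure (α i)) [∀ i, SigmaFinite (μ i)]
    (j : Fin (n + 1)) {f : (∀ i, α i) → E} (hf : Integrable f (Measure.pi μ)) :
    ∫ x, f x ∂Measure.pi μ =
      ∫ s, ∫ y, f (j.insertNth s y) ∂Measure.pi (fun i => μ (j.succAbove i)) ∂μ j := by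
  have hmp := (measurePreserving_piFinSuccAbove μ j).symm
  rw [← hmp.integral_comp', integral_prod]
  · rfl
  · exact (hmp.integrable_comp_emb (MeasurableEquiv.measurableEmbedding _)).2 hf

section Coordinate

variable {n : ℕ} (ν : Measure ℝ)

lemma integral_pi_add_eq_integral_integral_insertNth [SigmaFinite ν] (j : Fin (n + 1))
    (θ : Fin (n + 1) → ℝ) {F : (Fin (n + 1) → ℝ) → E}
    (hF : Integrable (fun ε => F (θ + ε)) (Measure.pi fun _ => ν)) :
    ∫ ε, F (θ + ε) ∂Measure.pi (fun _ => ν) =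
      ∫ s, ∫ y, F (j.insertNth (θ j + s) (j.removeNth θ + y)) ∂Measure.pi (fun _ => ν) ∂ν := by
  rw [integral_pi_eq_integral_integral_insertNth _ j hF]
  simp only [Fin.insertNth_add, Fin.insertNth_self_removeNth]

/-- `sectionIntegral ν F θ j u` is `𝔼[F (θ + ε) | θ j + ε j = u]` for `ε ∼ ν^⊗(n+1)`. -/
noncomputable def sectionIntegral (F : (Fin (n + 1) → ℝ) → E) (θ : Fin (n + 1) → ℝ)
    (j : Fin (n + 1)) (u : ℝ) : E :=
  ∫ y, F (j.insertNth u (j.removeNth θ + y)) ∂Measure.pi fun _ => ν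

variable {ν} {F : (Fin (n + 1) → ℝ) → E} {C : ℝ}

lemma stronglyMeasurable_sectionIntegral [SigmaFinite ν] (hF : StronglyMeasurable F)
    (θ : Fin (n + 1) → ℝ) (j : Fin (n + 1)) : StronglyMeasurable (sectionIntegral ν F θ j) :=
  (hF.comp_measurable ((MeasurableEquiv.piFinSuccAbove (fun _ => ℝ) j).symm.measurable.comp
    (measurable_fst.prodMk (measurable_snd.const_add (j.removeNth θ))))).integral_prod_right'

variable [IsProbabilityMeasure ν]

lemma norm_sectionIntegral_le (hC : ∀ x, ‖F x‖ ≤ C) (θ : Fin (n + 1) → ℝ) (j : Fin (n + 1))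
    (u : ℝ) : ‖sectionIntegral ν F θ j u‖ ≤ C := by
  simpa [sectionIntegral] using norm_integral_le_of_norm_le_const (μ := Measure.pi fun _ => ν)
    (.of_forall fun y => hC (j.insertNth u (j.removeNth θ + y)))

lemma integral_pi_update_add_eq_integral_sectionIntegral (hF : StronglyMeasurable F)
    (hC : ∀ x, ‖F x‖ ≤ C) (θ : Fin (n + 1) → ℝ) (j : Fin (n + 1)) (t : ℝ) :
    ∫ ε, F (Function.update θ j t + ε) ∂Measure.pi (fun _ => ν) =
      ∫ s, sectionIntegral ν F θ j (t + s) ∂ν := by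
  have hint : Integrable (fun ε => F (Function.update θ j t + ε)) (Measure.pi fun _ => ν) :=
    .of_bound (hF.comp_measurable (measurable_const.add measurable_id)).aestronglyMeasurable C
      (.of_forall fun ε => hC _)
  rw [integral_pi_add_eq_integral_integral_insertNth ν j _ hint]
  simp [sectionIntegral]

lemma integral_pi_smul_add_eq_integral_sectionIntegral (hν : Integrable id ν)
    (hF : StronglyMeasurable F) (hC : ∀ x, ‖F x‖ ≤ C) (θ : Fin (n + 1) → ℝ) (j : Fin (n + 1)) :
    ∫ ε, ε j • F (θ + ε) ∂Measure.pi (fun _ => ν) =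
      ∫ s, s • sectionIntegral ν F θ j (θ j + s) ∂ν := by
  have hcoord : Integrable (fun ε : Fin (n + 1) → ℝ => ε j) (Measure.pi fun _ => ν) :=
    (measurePreserving_eval (fun _ => ν) j).integrable_comp_of_integrable hν
  have hint : Integrable (fun ε => ε j • F (θ + ε)) (Measure.pi fun _ => ν) :=
    hcoord.smul_bdd C
      (hF.comp_measurable (measurable_const.add measurable_id)).aestronglyMeasurable
      (.of_forall fun ε => hC (θ + ε))
  calc ∫ ε, ε j • F (θ + ε) ∂Measure.pi (fun _ => ν)
      = ∫ ε, ((θ + ε) j - θ j) • F (θ + ε) ∂Measure.pi (fun _ => ν) := by simp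
    _ = ∫ s, s • sectionIntegral ν F θ j (θ j + s) ∂ν := by
      rw [integral_pi_add_eq_integral_integral_insertNth ν j θ (F := fun x => (x j - θ j) • F x)
        (by simpa using hint)]
      simp [sectionIntegral, integral_smul]

end Coordinate

/-- Coordinatewise score-function gradient identity for an isotropic Gaussian perturbation:
for the product measure `μ` with i.i.d. `N(0, σ²)` coordinates, the partial map
`t ↦ ∫ F(Function.update θ j t + ε) dμ(ε)` is differentiable at `t = θ j` with derivative
`(1/σ²) · ∫ (ε j) · F(θ + ε) dμ(ε)`. -/
theorem pi_gaussian_partial_hasDerivAt_score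
    (n : ℕ) (σ : ℝ) (hσ : 0 < σ) (F : (Fin n → ℝ) → ℝ)
    (hF_meas : Measurable F) (hF_bdd : ∃ C : ℝ, ∀ x, |F x| ≤ C)
    (θ : Fin n → ℝ) (j : Fin n) :
    HasDerivAt
      (fun t : ℝ =>
        ∫ ε, F (Function.update θ j t + ε)
          ∂(Measure.pi fun _ : Fin n => gaussianReal 0 (Real.toNNReal (σ ^ 2))))
      ((1 / σ ^ 2) *
        ∫ ε, (ε j) * F (θ + ε)
          ∂(Measure.pi fun _ : Fin n => gaussianReal 0 (Real.toNNReal (σ ^ 2))))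
      (θ j) := by
  obtain ⟨C, hC⟩ := hF_bdd
  obtain ⟨m, rfl⟩ := Nat.exists_eq_add_one_of_ne_zero j.pos.ne'
  have hv : (σ ^ 2).toNNReal ≠ 0 := (Real.toNNReal_pos.mpr (by positivity)).ne'
  have hF : StronglyMeasurable F := hF_meas.stronglyMeasurable
  have hC' : ∀ x, ‖F x‖ ≤ C := hC
  have hid : Integrable id (gaussianReal 0 (σ ^ 2).toNNReal) :=
    memLp_one_iff_integrable.mp (memLp_id_gaussianReal 1)
  have hvalue := integral_pi_smul_add_eq_integral_sectionIntegral hid hF hC' θ j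
  simp only [smul_eq_mul] at hvalue
  simp only [integral_pi_update_add_eq_integral_sectionIntegral hF hC' θ j, hvalue]
  refine (hasDerivAt_integral_gaussianReal_comp_add hv
    (stronglyMeasurable_sectionIntegral hF θ j).aestronglyMeasurable
    (norm_sectionIntegral_le hC' θ j) (θ j)).congr_deriv ?_
  simp only [Real.coe_toNNReal _ (sq_nonneg σ), one_div, smul_eq_mul]
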